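/- arXiv:0807.2292 — 5 statements merged into one kernel-verified Lean document; each statement's English description precedes it below -/
import Mathlib

section
/- If a rate assignment R : Fin n → ℝ satisfies the pairwise property and j : Fin n satisfies R j ≥ H[X j], then for every i : Fin n one has Relation.ReflTransGen E_R j i, where E_R is the decoding relation of R. -/
open MeasureTheory ProbabilityTheory

/-- Shannon entropy (in nats) of a random variable. -/
noncomputable def shEntropy {Ω : Type*} [MeasurableSpace Ω] {S : Type*}
    (μ : Measure Ω) (X : Ω → S) : ℝ :=
  ∑' x : S, Real.negMulLog (μ (X ⁻¹' {x})).toReal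

/-- Conditional Shannon entropy `H[X | Y]`. -/
noncomputable def shCondEntropy {Ω : Type*} [MeasurableSpace Ω] {S T : Type*}
    (μ : Measure Ω) (X : Ω → S) (Y : Ω → T) : ℝ :=
  ∑' y : T, (μ (Y ⁻¹' {y})).toReal * shEntropy (ProbabilityTheory.cond μ (Y ⁻¹' {y})) X

/-- The pairwise property of a rate assignment `R`: for each source `X i` there is an
ordered sequence of sources `X (s 1), …, X (s k)` with `R (s 1) ≥ H[X (s 1)]`,
`R (s j) ≥ H[X (s j) | X (s (j-1))]` for `2 ≤ j ≤ k`, and `R i ≥ H[X i | X (s k)]`. -/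
def PairwiseProperty {Ω S : Type*} [MeasurableSpace Ω] {n : ℕ}
    (μ : Measure Ω) (X : Fin n → Ω → S) (R : Fin n → ℝ) : Prop :=
  ∀ i : Fin n, ∃ (k : ℕ) (s : ℕ → Fin n), 1 ≤ k ∧
    R (s 1) ≥ shEntropy μ (X (s 1)) ∧
    (∀ j : ℕ, 2 ≤ j → j ≤ k → R (s j) ≥ shCondEntropy μ (X (s j)) (X (s (j - 1)))) ∧
    R i ≥ shCondEntropy μ (X i) (X (s k))

/-- The decoding relation of a rate assignment: `a` can help decode `b` if
`H[X b | X a] ≤ R b`. -/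
def decRel {Ω S : Type*} [MeasurableSpace Ω] {n : ℕ}
    (μ : Measure Ω) (X : Fin n → Ω → S) (R : Fin n → ℝ) : Fin n → Fin n → Prop :=
  fun a b => shCondEntropy μ (X b) (X a) ≤ R b

/-- `p` is an arborescence toward the root `j`: iterating `p` from any node reaches `j`. -/
def IsArborescence {n : ℕ} (j : Fin n) (p : Fin n → Fin n) : Prop :=
  ∀ i : Fin n, ∃ m : ℕ, p^[m] i = j

/-- The tree rate assignment associated with a root `j` and parent map `p`. -/
noncomputable def treeRate {Ω S : Type*} [MeasurableSpace Ω] {n : ℕ}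
    (μ : Measure Ω) (X : Fin n → Ω → S) (j : Fin n) (p : Fin n → Fin n) : Fin n → ℝ :=
  fun i => if i = j then shEntropy μ (X j) else shCondEntropy μ (X i) (X (p i))

/-- The cost (sum rate) of the tree rate assignment with root `j` and parent map `p`. -/
noncomputable def treeCost {Ω S : Type*} [MeasurableSpace Ω] {n : ℕ}
    (μ : Measure Ω) (X : Fin n → Ω → S) (j : Fin n) (p : Fin n → Fin n) : ℝ :=
  shEntropy μ (X j) + ∑ i ∈ Finset.univ.erase j, shCondEntropy μ (X i) (X (p i))

lemma shCondEntropy_le_shEntropy {Ω S T : Type*} [MeasurableSpace Ω]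
    [MeasurableSpace S] [MeasurableSingletonClass S]
    [MeasurableSpace T] [MeasurableSingletonClass T]
    (μ : Measure Ω) [IsProbabilityMeasure μ] (Y : Ω → S) (Z : Ω → T)
    (hY : Measurable Y) (hZ : Measurable Z)
    (hYfin : (Set.range Y).Finite) (hZfin : (Set.range Z).Finite) :
    shCondEntropy μ Y Z ≤ shEntropy μ Y := by
  classical
  set Ty := hYfin.toFinset with hTy
  set Tz := hZfin.toFinset with hTz
  have hmz : ∀ z : T, MeasurableSet (Z ⁻¹' {z}) := fun z => hZ (measurableSet_singleton z)
  have hYzero : ∀ x ∉ Ty, Y ⁻¹' {x} = (∅ : Set Ω) := by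
    intro x hx
    ext ω
    simp only [Set.mem_preimage, Set.mem_singleton_iff, Set.mem_empty_iff_false, iff_false]
    rintro rfl
    exact hx (by simpa [hTy] using Set.mem_range_self ω)
  have hZzero : ∀ z ∉ Tz, Z ⁻¹' {z} = (∅ : Set Ω) := by
    intro z hz
    ext ω
    simp only [Set.mem_preimage, Set.mem_singleton_iff, Set.mem_empty_iff_false, iff_false]
    rintro rfl
    exact hz (by simpa [hTz] using Set.mem_range_self ω)
  -- entropy of any probability-like measure as finite sum
  have hEnt : ∀ ν : Measure Ω, shEntropy ν Y = ∑ x ∈ Ty, Real.negMulLog (ν (Y ⁻¹' {x})).toReal := by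
    intro ν
    apply tsum_eq_sum
    intro x hx
    rw [hYzero x hx]
    simp
  have hCond : shCondEntropy μ Y Z
      = ∑ z ∈ Tz, (μ (Z ⁻¹' {z})).toReal * shEntropy (μ[|Z ⁻¹' {z}]) Y := by
    apply tsum_eq_sum
    intro z hz
    rw [hZzero z hz]
    simp
  -- partition facts
  have hdisj : (Tz : Set T).PairwiseDisjoint (fun z => Z ⁻¹' {z}) := by
    intro a _ b _ hab
    exact Set.disjoint_left.2 (by rintro ω h1 h2; exact hab (by
      simp only [Set.mem_preimage, Set.mem_singleton_iff] at h1 h2; rw [← h1, ← h2]))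
  have hcover : ∀ t : Set Ω, (⋃ z ∈ Tz, Z ⁻¹' {z} ∩ t) = t := by
    intro t
    ext ω
    simp only [Set.mem_iUnion, Set.mem_inter_iff, Set.mem_preimage, Set.mem_singleton_iff]
    constructor
    · rintro ⟨z, _, _, h⟩; exact h
    · intro h; exact ⟨Z ω, by simp [hTz], rfl, h⟩
  have hsum_meas : ∀ t : Set Ω, MeasurableSet t →
      ∑ z ∈ Tz, μ (Z ⁻¹' {z} ∩ t) = μ t := by
    intro t ht
    have hdisj2 : (Tz : Set T).PairwiseDisjoint (fun z => Z ⁻¹' {z} ∩ t) :=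
      fun a ha b hb hab =>
        (hdisj ha hb hab).mono Set.inter_subset_left Set.inter_subset_left
    rw [← measure_biUnion_finset hdisj2 (fun z _ => (hmz z).inter ht), hcover]
  have hfinmeas : ∀ s : Set Ω, μ s ≠ ⊤ := fun s => measure_ne_top μ s
  -- total probability
  have htotal : ∀ x : S, ∑ z ∈ Tz, (μ (Z ⁻¹' {z})).toReal * ((μ[|Z ⁻¹' {z}]) (Y ⁻¹' {x})).toReal
      = (μ (Y ⁻¹' {x})).toReal := by
    intro x
    have hmy : MeasurableSet (Y ⁻¹' {x}) := hY (measurableSet_singleton x)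
    have key : ∀ z ∈ Tz, (μ (Z ⁻¹' {z})).toReal * ((μ[|Z ⁻¹' {z}]) (Y ⁻¹' {x})).toReal
        = (μ (Z ⁻¹' {z} ∩ Y ⁻¹' {x})).toReal := by
      intro z _
      rw [cond_apply (hmz z)]
      rcases eq_or_ne (μ (Z ⁻¹' {z})) 0 with h0 | h0
      · have : μ (Z ⁻¹' {z} ∩ Y ⁻¹' {x}) = 0 :=
          measure_mono_null Set.inter_subset_left h0
        simp [h0, this]
      · rw [← ENNReal.toReal_mul, ← mul_assoc, ENNReal.mul_inv_cancel h0 (hfinmeas _), one_mul]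
    rw [Finset.sum_congr rfl key, ← ENNReal.toReal_sum (fun z _ => hfinmeas _),
      hsum_meas _ hmy]
  -- weights sum to 1
  have hwsum : ∑ z ∈ Tz, (μ (Z ⁻¹' {z})).toReal = 1 := by
    have := hsum_meas Set.univ MeasurableSet.univ
    simp only [Set.inter_univ] at this
    rw [← ENNReal.toReal_sum (fun z _ => hfinmeas _), this]
    simp
  rw [hCond, hEnt μ]
  have hswap : ∑ z ∈ Tz, (μ (Z ⁻¹' {z})).toReal * shEntropy (μ[|Z ⁻¹' {z}]) Y
      = ∑ x ∈ Ty, ∑ z ∈ Tz, (μ (Z ⁻¹' {z})).toReal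
          * Real.negMulLog ((μ[|Z ⁻¹' {z}]) (Y ⁻¹' {x})).toReal := by
    rw [Finset.sum_comm]
    refine Finset.sum_congr rfl fun z _ => ?_
    rw [hEnt (μ[|Z ⁻¹' {z}]), Finset.mul_sum]
  rw [hswap]
  refine Finset.sum_le_sum fun x _ => ?_
  have hjen := Real.concaveOn_negMulLog.le_map_sum
    (t := Tz) (w := fun z => (μ (Z ⁻¹' {z})).toReal)
    (p := fun z => ((μ[|Z ⁻¹' {z}]) (Y ⁻¹' {x})).toReal)
    (fun z _ => ENNReal.toReal_nonneg) hwsum (fun z _ => ENNReal.toReal_nonneg)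
  simpa [smul_eq_mul, htotal x] using hjen


/-- If `R` satisfies the pairwise property and `R j ≥ H[X j]`, then every node is
reachable from `j` through the decoding relation. -/
theorem reachable_from_parent_of_pairwiseProperty
    {Ω S : Type*} [MeasurableSpace Ω] [MeasurableSpace S] [MeasurableSingletonClass S]
    (μ : Measure Ω) [IsProbabilityMeasure μ] {n : ℕ} (hn : 1 ≤ n)
    (X : Fin n → Ω → S) (hX : ∀ i, Measurable (X i))
    (hfin : ∀ i, (Set.range (X i)).Finite) (R : Fin n → ℝ)
    (hR : PairwiseProperty μ X R) (j : Fin n) (hj : R j ≥ shEntropy μ (X j)) :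
    ∀ i : Fin n, Relation.ReflTransGen (decRel μ X R) j i := by
  intro i
  obtain ⟨k, s, hk, h1, h2, hlast⟩ := hR i
  have step : ∀ a b : Fin n, shCondEntropy μ (X b) (X a) ≤ shEntropy μ (X b) :=
    fun a b => shCondEntropy_le_shEntropy μ (X b) (X a) (hX b) (hX a) (hfin b) (hfin a)
  have hchain : ∀ m : ℕ, 1 ≤ m → m ≤ k →
      Relation.ReflTransGen (decRel μ X R) j (s m) := by
    intro m
    induction m with
    | zero => omega
    | succ m ih =>
      intro _ hmk
      rcases Nat.eq_or_lt_of_le (Nat.one_le_iff_ne_zero.2 (Nat.succ_ne_zero m)) with h | h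
      · -- m + 1 = 1
        have hm1 : m + 1 = 1 := h.symm
        rw [hm1]
        exact Relation.ReflTransGen.single (le_trans (step j (s 1)) h1)
      · have hm : 1 ≤ m := by omega
        have := ih hm (by omega)
        refine this.tail ?_
        have := h2 (m + 1) (by omega) hmk
        simpa [decRel] using this
  exact (hchain k hk le_rfl).tail (by simpa [decRel] using hlast)
end

section
/- For every j : Fin n and every p : Fin n → Fin n that is an arborescence toward j, the tree rate assignment R^{j,p} satisfies the pairwise property. -/
open MeasureTheory ProbabilityTheory

section Aux

open MeasureTheory ProbabilityTheory

lemma shEntropy_nonneg {Ω : Type*} [MeasurableSpace Ω] {S : Type*}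
    (μ : Measure Ω) [IsProbabilityMeasure μ] (X : Ω → S) : 0 ≤ shEntropy μ X := by
  apply tsum_nonneg
  intro x
  apply Real.negMulLog_nonneg ENNReal.toReal_nonneg
  exact ENNReal.toReal_le_of_le_ofReal zero_le_one (by simpa using prob_le_one)

lemma shCondEntropy_self {Ω : Type*} [MeasurableSpace Ω] {S : Type*} [MeasurableSpace S]
    [MeasurableSingletonClass S] (μ : Measure Ω) [IsProbabilityMeasure μ]
    (X : Ω → S) (hX : Measurable X) : shCondEntropy μ X X = 0 := by
  unfold shCondEntropy
  have h : ∀ y : S, shEntropy (ProbabilityTheory.cond μ (X ⁻¹' {y})) X = 0 := by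
    intro y
    unfold shEntropy
    have : ∀ x : S,
        Real.negMulLog ((ProbabilityTheory.cond μ (X ⁻¹' {y}) (X ⁻¹' {x})).toReal) = 0 := by
      intro x
      have hms : MeasurableSet (X ⁻¹' {y}) := hX (measurableSet_singleton y)
      rw [ProbabilityTheory.cond_apply hms]
      by_cases hxy : x = y
      · subst hxy
        rw [Set.inter_self]
        by_cases h0 : μ (X ⁻¹' {x}) = 0
        · simp [h0]
        · rw [ENNReal.inv_mul_cancel h0 (measure_ne_top μ _)]
          simp
      · have : X ⁻¹' {y} ∩ X ⁻¹' {x} = ∅ := by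
          ext ω; simp; intro h1 h2; exact hxy (h2 ▸ h1.symm ▸ rfl)
        rw [this]
        simp
    simp [this]
  simp [h]

end Aux

/-- Tree rate assignments built from arborescences satisfy the pairwise property. -/
theorem treeRate_pairwiseProperty
    {Ω S : Type*} [MeasurableSpace Ω] [MeasurableSpace S] [MeasurableSingletonClass S]
    (μ : Measure Ω) [IsProbabilityMeasure μ] {n : ℕ} (hn : 1 ≤ n)
    (X : Fin n → Ω → S) (hX : ∀ i, Measurable (X i))
    (hfin : ∀ i, (Set.range (X i)).Finite)
    (j : Fin n) (p : Fin n → Fin n) (hp : IsArborescence j p) :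
    PairwiseProperty μ X (treeRate μ X j p) := by
  intro i
  by_cases hij : i = j
  · subst hij
    refine ⟨1, fun _ => i, le_refl 1, ?_, ?_, ?_⟩
    · simp [treeRate]
    · intro t h2 h1; omega
    · rw [shCondEntropy_self μ (X i) (hX i)]
      simp only [treeRate, if_pos rfl]
      exact shEntropy_nonneg μ (X i)
  · have hex : ∃ m : ℕ, p^[m] i = j := hp i
    set m := Nat.find hex with hm_def
    have hm : p^[m] i = j := Nat.find_spec hex
    have hm1 : 1 ≤ m := by
      rcases Nat.eq_zero_or_pos m with h0 | h0
      · exfalso; apply hij; rw [h0] at hm; simpa using hm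
      · exact h0
    refine ⟨m, fun t => p^[m + 1 - t] i, hm1, ?_, ?_, ?_⟩
    · have : m + 1 - 1 = m := by omega
      simp only
      rw [this, hm]
      simp [treeRate]
    · intro t h2 ht
      have hne : p^[m + 1 - t] i ≠ j := by
        intro hEq
        exact Nat.find_min hex (by omega : m + 1 - t < m) hEq
      simp only [treeRate, if_neg hne]
      have hpar : p (p^[m + 1 - t] i) = p^[m + 1 - (t - 1)] i := by
        rw [← Function.iterate_succ_apply' p (m + 1 - t) i]
        congr 1
        omega
      rw [hpar]
    · have : m + 1 - m = 1 := by omega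
      simp only
      rw [this]
      simp only [treeRate, if_neg hij, Function.iterate_one]
      exact le_refl _
end

section
/- Let n ≥ 1, let w : Fin n → Fin n → ℝ satisfy w a b = w b a for all a, b, and let c : ℝ. For j : Fin n define m(j) as the minimum, over all p : Fin n → Fin n such that for every i there exists m : ℕ with p^[m] i = j, of c + Σ_{i ≠ j} w (p i) i. Then m(j₁) = m(j₂) for all j₁, j₂ : Fin n; i.e., with symmetric edge weights, the minimum arborescence cost is independent of the choice of root. -/
open Finset Function

lemma reroot {n : ℕ} (w : Fin n → Fin n → ℝ) (hw : ∀ a b, w a b = w b a)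
    (j₁ j₂ : Fin n) (p : Fin n → Fin n) (hp : IsArborescence j₁ p) :
    ∃ q : Fin n → Fin n, IsArborescence j₂ q ∧
      ∑ i ∈ Finset.univ.erase j₂, w (q i) i = ∑ i ∈ Finset.univ.erase j₁, w (p i) i := by
  classical
  obtain ⟨M, hM⟩ := hp j₂
  have hex : ∃ k, p^[k] j₂ = j₁ := ⟨M, hM⟩
  set L := Nat.find hex with hLdef
  set v : ℕ → Fin n := fun k => p^[k] j₂ with hv
  have hvL : v L = j₁ := Nat.find_spec hex
  have hmin : ∀ k < L, v k ≠ j₁ := fun k hk => Nat.find_min hex hk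
  have hv0 : v 0 = j₂ := rfl
  have hstep : ∀ k, v (k + 1) = p (v k) := by
    intro k; simp [hv, Function.iterate_succ_apply']
  have hshift : ∀ a t, v (a + t) = p^[t] (v a) := by
    intro a t
    simp only [hv]
    rw [Nat.add_comm, Function.iterate_add_apply]
  have hinj : ∀ a b, a ≤ L → b ≤ L → v a = v b → a = b := by
    have key : ∀ a b, a ≤ L → b ≤ L → a < b → v a = v b → False := by
      intro a b ha hb hab heq
      have h1 : v (b + (L - b)) = j₁ := by rw [Nat.add_sub_cancel' hb]; exact hvL
      have h2 : v (a + (L - b)) = j₁ := by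
        rw [hshift, heq, ← hshift]; exact h1
      exact hmin _ (by omega) h2
    intro a b ha hb heq
    rcases lt_trichotomy a b with h | h | h
    · exact absurd heq (fun he => key a b ha hb h he)
    · exact h
    · exact absurd heq.symm (fun he => key b a hb ha h he)
  let q : Fin n → Fin n := fun i =>
    if h : ∃ k, k < L ∧ v (k + 1) = i then v (Nat.find h) else if i = j₂ then j₂ else p i
  have q_path : ∀ k < L, q (v (k + 1)) = v k := by
    intro k hk
    have h : ∃ k', k' < L ∧ v (k' + 1) = v (k + 1) := ⟨k, hk, rfl⟩
    have hfind := Nat.find_spec h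
    have : Nat.find h + 1 = k + 1 :=
      hinj _ _ (by omega) (by omega) hfind.2
    simp only [q, dif_pos h]
    rw [Nat.succ_injective this]
  have q_root : q j₂ = j₂ := by
    have hno : ¬ ∃ k, k < L ∧ v (k + 1) = j₂ := by
      rintro ⟨k, hk, hke⟩
      have := hinj (k + 1) 0 (by omega) (by omega) (by rw [hke, hv0])
      omega
    simp [q, hno]
  have q_off : ∀ i : Fin n, (∀ k ≤ L, v k ≠ i) → q i = p i := by
    intro i hi
    have hno : ¬ ∃ k, k < L ∧ v (k + 1) = i := by
      rintro ⟨k, hk, hke⟩; exact hi (k + 1) (by omega) hke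
    have hij : i ≠ j₂ := fun he => hi 0 (by omega) (by rw [hv0, he])
    simp [q, hno, hij]
  -- q reaches j₂ from path vertices
  have qA : ∀ k ≤ L, q^[k] (v k) = j₂ := by
    intro k
    induction k with
    | zero => intro _; exact hv0
    | succ k ih =>
      intro hk
      rw [Function.iterate_succ_apply, q_path k (by omega)]
      exact ih (by omega)
  refine ⟨q, ?_, ?_⟩
  · intro i
    obtain ⟨M', hM'⟩ := hp i
    have hexT : ∃ t, ∃ k ≤ L, v k = p^[t] i := ⟨M', L, le_refl _, by rw [hvL, hM']⟩
    set T := Nat.find hexT with hT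
    obtain ⟨k, hkL, hkv⟩ := Nat.find_spec hexT
    have hsame : ∀ s ≤ T, q^[s] i = p^[s] i := by
      intro s
      induction s with
      | zero => intro _; rfl
      | succ s ih =>
        intro hs
        have hoff : ∀ k' ≤ L, v k' ≠ p^[s] i := by
          intro k' hk' he
          exact Nat.find_min hexT (show s < T by omega) ⟨k', hk', he⟩
        rw [Function.iterate_succ_apply', ih (by omega), q_off _ hoff]
        exact (Function.iterate_succ_apply' p s i).symm
    refine ⟨k + T, ?_⟩
    rw [Function.iterate_add_apply, hsame T le_rfl, ← hkv, qA k hkL]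
  · -- cost equality
    set S : Finset (Fin n) := (Finset.range (L + 1)).image v with hS
    have hj₂S : j₂ ∈ S := mem_image.mpr ⟨0, by simp, hv0⟩
    have hj₁S : j₁ ∈ S := mem_image.mpr ⟨L, by simp, hvL⟩
    have hsplit : ∀ j : Fin n, j ∈ S →
        Finset.univ.erase j = (S.erase j) ∪ (Finset.univ \ S) := by
      intro j hj
      ext x
      simp only [mem_erase, mem_union, mem_sdiff, mem_univ, and_true, true_and]
      constructor
      · intro hx
        by_cases hxS : x ∈ S
        · exact Or.inl ⟨hx, hxS⟩
        · exact Or.inr hxS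
      · rintro (⟨hx, _⟩ | hx)
        · exact hx
        · intro he; exact hx (he ▸ hj)
    have hdisj : ∀ j : Fin n, Disjoint (S.erase j) (Finset.univ \ S) := by
      intro j
      simp only [Finset.disjoint_left, mem_erase, mem_sdiff]
      rintro a ⟨_, ha⟩ ⟨_, ha'⟩; exact ha' ha
    have hoffeq : ∀ i ∈ Finset.univ \ S, w (q i) i = w (p i) i := by
      intro i hi
      rw [mem_sdiff] at hi
      have : ∀ k ≤ L, v k ≠ i := by
        intro k hk he
        exact hi.2 (mem_image.mpr ⟨k, mem_range.mpr (by omega), he⟩)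
      rw [q_off i this]
    have hS2 : S.erase j₂ = (Finset.range L).image (fun k => v (k + 1)) := by
      ext x
      simp only [mem_erase, hS, mem_image, mem_range]
      constructor
      · rintro ⟨hx, k, hk, hkv⟩
        have hk0 : k ≠ 0 := by
          rintro rfl; exact hx (by rw [← hkv, hv0])
        exact ⟨k - 1, by omega, by rw [Nat.sub_add_cancel (by omega)]; exact hkv⟩
      · rintro ⟨k, hk, hkv⟩
        refine ⟨?_, k + 1, by omega, hkv⟩
        intro he
        have := hinj (k + 1) 0 (by omega) (by omega) (by rw [hkv, he, hv0])
        omega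
    have hS1 : S.erase j₁ = (Finset.range L).image v := by
      ext x
      simp only [mem_erase, hS, mem_image, mem_range]
      constructor
      · rintro ⟨hx, k, hk, hkv⟩
        have hkL : k ≠ L := by
          rintro rfl; exact hx (by rw [← hkv, hvL])
        exact ⟨k, by omega, hkv⟩
      · rintro ⟨k, hk, hkv⟩
        refine ⟨?_, k, by omega, hkv⟩
        intro he
        have := hinj k L (by omega) le_rfl (by rw [hkv, he, hvL])
        omega
    have hinj1 : ∀ a ∈ Finset.range L, ∀ b ∈ Finset.range L, v a = v b → a = b := by
      intro a ha b hb he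
      exact hinj a b (by simp at ha; omega) (by simp at hb; omega) he
    have hinj2 : ∀ a ∈ Finset.range L, ∀ b ∈ Finset.range L,
        v (a + 1) = v (b + 1) → a = b := by
      intro a ha b hb he
      have := hinj (a + 1) (b + 1) (by simp at ha; omega) (by simp at hb; omega) he
      omega
    rw [hsplit j₂ hj₂S, hsplit j₁ hj₁S, Finset.sum_union (hdisj j₂),
      Finset.sum_union (hdisj j₁), Finset.sum_congr rfl hoffeq, hS2, hS1,
      Finset.sum_image hinj2, Finset.sum_image hinj1]
    congr 1
    apply Finset.sum_congr rfl
    intro k hk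
    rw [mem_range] at hk
    rw [q_path k hk, ← hstep k, hw]

/-- With symmetric edge weights, the minimum arborescence cost is independent of
the choice of root. -/
theorem min_arborescence_cost_root_indep
    {n : ℕ} (hn : 1 ≤ n) (w : Fin n → Fin n → ℝ) (hw : ∀ a b, w a b = w b a) (c : ℝ)
    (m : Fin n → ℝ)
    (hm : ∀ j : Fin n, IsLeast
      {x : ℝ | ∃ p : Fin n → Fin n, IsArborescence j p ∧
        x = c + ∑ i ∈ Finset.univ.erase j, w (p i) i} (m j)) :
    ∀ j₁ j₂ : Fin n, m j₁ = m j₂ := by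
  have key : ∀ j₁ j₂ : Fin n, m j₂ ≤ m j₁ := by
    intro j₁ j₂
    obtain ⟨p, hp, heq⟩ := (hm j₁).1
    obtain ⟨q, hq, hsum⟩ := reroot w hw j₁ j₂ p hp
    have : c + ∑ i ∈ Finset.univ.erase j₂, w (q i) i ∈
        {x : ℝ | ∃ p : Fin n → Fin n, IsArborescence j₂ p ∧
          x = c + ∑ i ∈ Finset.univ.erase j₂, w (p i) i} := ⟨q, hq, rfl⟩
    have h2 := (hm j₂).2 this
    rw [hsum, ← heq] at h2
    exact h2
  exact fun j₁ j₂ => le_antisymm (key j₂ j₁) (key j₁ j₂)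
end

section
/- Let F = (E, A) be a matching forest on a finite vertex type V, and let i ≠ j be vertices such that no directed edge of F has head i and no directed edge of F has head j (i.e. (a, i) ∉ A and (a, j) ∉ A for all a), and such that h_F(i) = 0 or h_F(j) = 0. Then there is no path from i to j in UUG(F) of length at least 2 (a path i − α₁ − ⋯ − α_k − j with k ≥ 1 intermediate vertices). -/
/-- A mixed graph on a vertex type `V`: a finite set `E` of undirected edges (with no
loops) and a finite set `A` of directed edges (with no self-loops). -/
structure MixedGraph (V : Type*) where
  E : Finset (Sym2 V)
  A : Finset (V × V)
  no_loops : ∀ e ∈ E, ¬ e.IsDiag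
  no_diag : ∀ a ∈ A, a.1 ≠ a.2

/-- `headCount F i` is the number of edges of `F` of which `i` is a head: `i` is a head
of an undirected edge iff it is one of its endpoints, and of a directed edge iff it is
its target. -/
def MixedGraph.headCount {V : Type*} [DecidableEq V] (F : MixedGraph V) (i : V) : ℕ :=
  (F.E.filter fun e => i ∈ e).card + (F.A.filter fun a => a.2 = i).card

/-- The underlying undirected graph of a mixed graph: `a ~ b` iff `a ≠ b` and the two
vertices are joined by an undirected edge or by a directed edge (in either direction). -/
def MixedGraph.UUG {V : Type*} (F : MixedGraph V) : SimpleGraph V :=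
  SimpleGraph.fromRel fun a b => s(a, b) ∈ F.E ∨ (a, b) ∈ F.A

/-- A matching forest: every vertex is the head of at most one edge, no two distinct
edges share the same underlying unordered vertex pair, and the underlying undirected
graph is acyclic. -/
def MixedGraph.IsMatchingForest {V : Type*} [DecidableEq V] (F : MixedGraph V) : Prop :=
  (∀ i : V, F.headCount i ≤ 1) ∧
  (∀ a b : V, ¬((a, b) ∈ F.A ∧ (b, a) ∈ F.A)) ∧
  (∀ a b : V, s(a, b) ∈ F.E → (a, b) ∉ F.A ∧ (b, a) ∉ F.A) ∧
  F.UUG.IsAcyclic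

/-- `F` is a sub-mixed-graph of `G`. -/
def MixedGraph.IsSubgraph {V : Type*} (F G : MixedGraph V) : Prop :=
  F.E ⊆ G.E ∧ F.A ⊆ G.A

/-- Auxiliary: a path ending at `j` (which has no incoming arcs) cannot start at a
vertex with an incoming arc from a vertex outside the path's support. -/
lemma matchingForest_aux {V : Type*} [DecidableEq V]
    (F : MixedGraph V) (hF : F.IsMatchingForest) (j : V)
    (hj : ∀ a : V, (a, j) ∉ F.A) :
    ∀ {x : V} (p : F.UUG.Walk x j), p.IsPath →
      ∀ u : V, (u, x) ∈ F.A → u ∉ p.support → False := by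
  intro x p
  induction p with
  | nil => intro _ u hu _; exact hj u hu
  | @cons x y j h q ih =>
    intro hp u hu hus
    rw [SimpleGraph.Walk.cons_isPath_iff] at hp
    have hadj := h
    rw [MixedGraph.UUG, SimpleGraph.fromRel_adj] at hadj
    have hy_supp : y ∈ (SimpleGraph.Walk.cons h q).support := by
      simp [SimpleGraph.Walk.support_cons, SimpleGraph.Walk.start_mem_support]
    have hune : u ≠ y := fun e => hus (e ▸ hy_supp)
    have h1 : 1 ≤ (F.A.filter fun a => a.2 = x).card :=
      Finset.card_pos.mpr ⟨(u, x), Finset.mem_filter.mpr ⟨hu, rfl⟩⟩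
    have hle := hF.1 x
    rw [MixedGraph.headCount] at hle
    have hEcase : s(x, y) ∈ F.E → False := by
      intro hE
      have h2 : 1 ≤ (F.E.filter fun e => x ∈ e).card :=
        Finset.card_pos.mpr ⟨s(x, y), Finset.mem_filter.mpr ⟨hE, by simp⟩⟩
      omega
    have hBack : (y, x) ∈ F.A → False := by
      intro hA
      have h2 : 2 ≤ (F.A.filter fun a => a.2 = x).card := by
        apply Finset.one_lt_card.mpr
        exact ⟨(u, x), Finset.mem_filter.mpr ⟨hu, rfl⟩,
               (y, x), Finset.mem_filter.mpr ⟨hA, rfl⟩, by simp [hune]⟩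
      omega
    rcases hadj.2 with (hE | hA) | (hE | hA)
    · exact hEcase hE
    · exact ih hj hp.1 x hA hp.2
    · exact hEcase (by rwa [Sym2.eq_swap] at hE)
    · exact hBack hA

lemma matchingForest_noPath {V : Type*} [DecidableEq V]
    (F : MixedGraph V) (hF : F.IsMatchingForest) (i j : V) (hij : i ≠ j)
    (h0 : F.headCount i = 0) (hj : ∀ a : V, (a, j) ∉ F.A)
    (p : F.UUG.Walk i j) (hp : p.IsPath) : False := by
  have hE0 : (F.E.filter fun e => i ∈ e).card = 0 ∧
      (F.A.filter fun a => a.2 = i).card = 0 := by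
    rw [MixedGraph.headCount] at h0; omega
  cases p with
  | nil => exact hij rfl
  | @cons _ y _ h q =>
    rw [SimpleGraph.Walk.cons_isPath_iff] at hp
    have hadj := h
    rw [MixedGraph.UUG, SimpleGraph.fromRel_adj] at hadj
    have hEcase : s(i, y) ∈ F.E → False := by
      intro hE
      have h2 : 1 ≤ (F.E.filter fun e => i ∈ e).card :=
        Finset.card_pos.mpr ⟨s(i, y), Finset.mem_filter.mpr ⟨hE, by simp⟩⟩
      omega
    have hBack : (y, i) ∈ F.A → False := by
      intro hA
      have h2 : 1 ≤ (F.A.filter fun a => a.2 = i).card :=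
        Finset.card_pos.mpr ⟨(y, i), Finset.mem_filter.mpr ⟨hA, rfl⟩⟩
      omega
    rcases hadj.2 with (hE | hA) | (hE | hA)
    · exact hEcase hE
    · exact matchingForest_aux F hF j hj q hp.1 i hA hp.2
    · exact hEcase (by rwa [Sym2.eq_swap] at hE)
    · exact hBack hA

/-- In a matching forest, if neither `i` nor `j` has an incoming directed edge and one
of them has head count `0`, then there is no path of length at least `2` from `i` to
`j` in the underlying undirected graph. -/
theorem no_long_path_in_matchingForest
    {V : Type*} [Fintype V] [DecidableEq V]
    (F : MixedGraph V) (hF : F.IsMatchingForest) (i j : V) (hij : i ≠ j)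
    (hi : ∀ a : V, (a, i) ∉ F.A) (hj : ∀ a : V, (a, j) ∉ F.A)
    (h0 : F.headCount i = 0 ∨ F.headCount j = 0) :
    ¬ ∃ p : F.UUG.Walk i j, p.IsPath ∧ 2 ≤ p.length := by
  rintro ⟨p, hp, -⟩
  rcases h0 with h0 | h0
  · exact matchingForest_noPath F hF i j hij h0 hj p hp
  · exact matchingForest_noPath F hF j i hij.symm h0 hi p.reverse hp.reverse
end

section
/- Let F = (E, A) be a matching forest on a finite vertex type V and let i ≠ j be vertices with h_F(i) = 0 and h_F(j) = 0. Then F' = (E ∪ {s(i, j)}, A), obtained by adding the undirected edge {i, j}, is again a matching forest, and h_{F'}(i) = h_{F'}(j) = 1. -/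
/-- Add an undirected edge between two distinct vertices of a mixed graph. -/
def MixedGraph.addUndirEdge {V : Type*} [DecidableEq V] (F : MixedGraph V) {i j : V}
    (h : i ≠ j) : MixedGraph V where
  E := insert s(i, j) F.E
  A := F.A
  no_loops := by
    intro e he
    rcases Finset.mem_insert.mp he with rfl | he
    · simpa [Sym2.mk_isDiag_iff] using h
    · exact F.no_loops e he
  no_diag := F.no_diag

/-!
Every edge of `UUG F` has a head among its endpoints, and in a matching forest distinct edges
have distinct heads. Follow a path from `j` to `i`, both of head count `0`, backwards from `i`:
the last edge is not headed at `i`, so it is an arc into the previous vertex; that vertex is then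
taken, so the edge before is again an arc pointing towards `j`, and so on, until the first edge
makes `j` a head. Hence `i` and `j` lie in different components of `UUG F`, and joining them keeps
the graph acyclic. No arc ends at `i` or `j`, so the new edge is parallel to no arc and is the
only edge headed at either endpoint.
-/

namespace MixedGraph

variable {V : Type*}

lemma uug_adj {F : MixedGraph V} {a b : V} :
    F.UUG.Adj a b ↔ a ≠ b ∧ (s(a, b) ∈ F.E ∨ (a, b) ∈ F.A ∨ (b, a) ∈ F.A) := by
  simp only [UUG, SimpleGraph.fromRel_adj, Sym2.eq_swap (a := b)]
  tauto

variable [DecidableEq V]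

lemma uug_addUndirEdge (F : MixedGraph V) {i j : V} (hij : i ≠ j) :
    (F.addUndirEdge hij).UUG = F.UUG ⊔ SimpleGraph.edge i j := by
  ext a b
  simp only [SimpleGraph.sup_adj, uug_adj, SimpleGraph.edge_adj, addUndirEdge,
    Finset.mem_insert, Sym2.eq_iff]
  tauto

lemma headCount_eq_zero_iff {F : MixedGraph V} {v : V} :
    F.headCount v = 0 ↔ (∀ e ∈ F.E, v ∉ e) ∧ ∀ a ∈ F.A, a.2 ≠ v := by
  simp [headCount, Finset.filter_eq_empty_iff]

lemma headCount_addUndirEdge {F : MixedGraph V} {i j : V} (hij : i ≠ j) (hnew : s(i, j) ∉ F.E)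
    (v : V) :
    (F.addUndirEdge hij).headCount v = F.headCount v + if v ∈ s(i, j) then 1 else 0 := by
  simp only [headCount, addUndirEdge, Finset.filter_insert]
  split_ifs with hv
  · rw [Finset.card_insert_of_notMem (fun h => hnew (Finset.mem_filter.mp h).1)]
    omega
  · rfl

lemma eq_of_mem_A_of_headCount_le_one {F : MixedGraph V} {v c d : V} (hv : F.headCount v ≤ 1)
    (hc : (c, v) ∈ F.A) (hd : (d, v) ∈ F.A) : c = d := by
  have hcard : (F.A.filter fun a => a.2 = v).card ≤ 1 := le_trans (Nat.le_add_left _ _) hv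
  have := Finset.card_le_one.mp hcard (c, v) (by simp [hc]) (d, v) (by simp [hd])
  exact congrArg Prod.fst this

lemma notMem_of_mem_E_of_mem_A {F : MixedGraph V} {v c : V} {e : Sym2 V}
    (hv : F.headCount v ≤ 1) (hc : (c, v) ∈ F.A) (he : e ∈ F.E) : v ∉ e := by
  intro hve
  have hE : 0 < (F.E.filter fun e => v ∈ e).card := Finset.card_pos.mpr ⟨e, by simp [he, hve]⟩
  have hA : 0 < (F.A.filter fun a => a.2 = v).card := Finset.card_pos.mpr ⟨(c, v), by simp [hc]⟩
  unfold headCount at hv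
  omega

theorem snd_mem_A_of_isPath {F : MixedGraph V} (hF : ∀ v, F.headCount v ≤ 1) {b i : V}
    {q : F.UUG.Walk b i} (hq : q.IsPath) (hi : F.headCount i = 0) (hnil : ¬q.Nil) :
    (q.snd, b) ∈ F.A := by
  induction q with
  | nil => exact absurd .nil hnil
  | @cons b v i hadj q ih =>
    obtain ⟨hq, hb⟩ := (SimpleGraph.Walk.cons_isPath_iff _ _).mp hq
    rw [SimpleGraph.Walk.snd_cons]
    by_cases hqnil : q.Nil
    · cases hqnil.eq
      obtain ⟨hiE, hiA⟩ := headCount_eq_zero_iff.mp hi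
      rcases (uug_adj.mp hadj).2 with h | h | h
      exacts [absurd (Sym2.mem_mk_right b v) (hiE _ h), absurd rfl (hiA _ h), h]
    · have hv := ih hq hi hqnil
      rcases (uug_adj.mp hadj).2 with h | h | h
      · exact absurd (Sym2.mem_mk_right b v) (notMem_of_mem_E_of_mem_A (hF v) hv h)
      · have hbq : b = q.snd := eq_of_mem_A_of_headCount_le_one (hF v) h hv
        exact absurd (hbq ▸ List.mem_of_mem_tail (q.snd_mem_tail_support hqnil)) hb
      · exact h

theorem not_reachable_of_headCount_eq_zero {F : MixedGraph V} (hF : ∀ v, F.headCount v ≤ 1)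
    {i j : V} (hij : i ≠ j) (hi : F.headCount i = 0) (hj : F.headCount j = 0) :
    ¬F.UUG.Reachable i j := by
  rintro ⟨w⟩
  have harc := snd_mem_A_of_isPath hF w.bypass_isPath hj (SimpleGraph.Walk.not_nil_of_ne hij)
  exact (headCount_eq_zero_iff.mp hi).2 _ harc rfl

end MixedGraph

theorem addUndirEdge_isMatchingForest_general
    {V : Type*} [DecidableEq V]
    (F : MixedGraph V) (hF : F.IsMatchingForest) (i j : V) (hij : i ≠ j)
    (hi : F.headCount i = 0) (hj : F.headCount j = 0) :
    (F.addUndirEdge hij).IsMatchingForest ∧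
      (F.addUndirEdge hij).headCount i = 1 ∧ (F.addUndirEdge hij).headCount j = 1 := by
  obtain ⟨hhead, hanti, hpar, hacyc⟩ := hF
  have hfree : ∀ v ∈ s(i, j), F.headCount v = 0 := by
    intro v hv
    rcases Sym2.mem_iff.mp hv with rfl | rfl
    exacts [hi, hj]
  have hnew : s(i, j) ∉ F.E := fun h =>
    (MixedGraph.headCount_eq_zero_iff.mp hi).1 _ h (Sym2.mem_mk_left i j)
  have hcount := MixedGraph.headCount_addUndirEdge hij hnew
  refine ⟨⟨fun v => ?_, hanti, fun a b hab => ?_, ?_⟩, by simp [hcount, hi], by simp [hcount, hj]⟩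
  · rw [hcount]
    split_ifs with hv
    · simp [hfree v hv]
    · simpa using hhead v
  · rcases Finset.mem_insert.mp hab with heq | hab
    · have hnoArc : ∀ x, x ∈ s(a, b) → ∀ y, (y, x) ∉ F.A := fun x hx y hy =>
        (MixedGraph.headCount_eq_zero_iff.mp (hfree x (heq ▸ hx))).2 _ hy rfl
      exact ⟨hnoArc b (Sym2.mem_mk_right a b) a, hnoArc a (Sym2.mem_mk_left a b) b⟩
    · exact hpar a b hab
  · rw [MixedGraph.uug_addUndirEdge]
    exact hacyc.sup_edge_of_not_reachable
      (MixedGraph.not_reachable_of_headCount_eq_zero hhead hij hi hj)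

/-- Adding an undirected edge between two distinct vertices of head count `0` of a
matching forest yields a matching forest in which both endpoints have head count `1`. -/
theorem addUndirEdge_isMatchingForest
    {V : Type*} [Fintype V] [DecidableEq V]
    (F : MixedGraph V) (hF : F.IsMatchingForest) (i j : V) (hij : i ≠ j)
    (hi : F.headCount i = 0) (hj : F.headCount j = 0) :
    (F.addUndirEdge hij).IsMatchingForest ∧
      (F.addUndirEdge hij).headCount i = 1 ∧ (F.addUndirEdge hij).headCount j = 1 :=
  addUndirEdge_isMatchingForest_general F hF i j hij hi hj
end
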